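/- Let s, r, q be real numbers with s ≥ 0, r > 0, and q² ≤ s·r. Define T_CLR = (1/2)(s − r + √((s + r)² − 4(sr − q²))). Then (s + r)² − 4(sr − q²) = (s − r)² + 4q² ≥ 0, and q²/r ≤ T_CLR ≤ s. In other words, the mrCLR statistic always lies between the mrK statistic and the mrAR statistic: T_mrK ≤ T_mrCLR ≤ T_mrAR. -/

import Mathlib

/-! `T_CLR` is the larger root `(a + √(a² + 4b)) / 2` of `x² = a x + b` with `a = s - r`, `b = q²`,
so comparing a number `y` with it comes down to the sign of `y² - a y - b`. At `y = s` this is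
`s r - q² ≥ 0`, and at `y = q² / r` it is `q² (q² - s r) / r² ≤ 0`. -/

namespace Real

theorem le_half_add_sqrt_of_sq_le {a b y : ℝ} (h : y ^ 2 ≤ a * y + b) :
    y ≤ 1 / 2 * (a + √(a ^ 2 + 4 * b)) := by
  have : 2 * y - a ≤ √(a ^ 2 + 4 * b) :=
    (le_abs_self _).trans (abs_le_sqrt (by nlinarith))
  linarith

theorem half_add_sqrt_le_of_le_sq {a b y : ℝ} (ha : a ≤ 2 * y) (h : a * y + b ≤ y ^ 2) :
    1 / 2 * (a + √(a ^ 2 + 4 * b)) ≤ y := by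
  have : √(a ^ 2 + 4 * b) ≤ 2 * y - a := sqrt_le_iff.mpr ⟨by linarith, by nlinarith⟩
  linarith

end Real

/-- For `s ≥ 0`, `r > 0` and `q² ≤ s·r`, the CLR statistic
`T_CLR = (1/2)(s - r + √((s + r)² - 4(sr - q²)))` satisfies
`(s + r)² - 4(sr - q²) = (s - r)² + 4q² ≥ 0` and `q²/r ≤ T_CLR ≤ s`:
the mrCLR statistic lies between the mrK and mrAR statistics. -/
theorem clr_between_k_and_ar (s r q : ℝ) (hs : 0 ≤ s) (hr : 0 < r) (hq : q ^ 2 ≤ s * r) :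
    ((s + r) ^ 2 - 4 * (s * r - q ^ 2) = (s - r) ^ 2 + 4 * q ^ 2 ∧
      0 ≤ (s + r) ^ 2 - 4 * (s * r - q ^ 2)) ∧
    q ^ 2 / r ≤ (1 / 2) * (s - r + Real.sqrt ((s + r) ^ 2 - 4 * (s * r - q ^ 2))) ∧
    (1 / 2) * (s - r + Real.sqrt ((s + r) ^ 2 - 4 * (s * r - q ^ 2))) ≤ s := by
  have hdisc : (s + r) ^ 2 - 4 * (s * r - q ^ 2) = (s - r) ^ 2 + 4 * q ^ 2 := by ring
  have hk : (q ^ 2 / r) ^ 2 ≤ (s - r) * (q ^ 2 / r) + q ^ 2 := by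
    have : (s - r) * (q ^ 2 / r) + q ^ 2 - (q ^ 2 / r) ^ 2 = q ^ 2 / r ^ 2 * (s * r - q ^ 2) := by
      field_simp
      ring
    have := mul_nonneg (div_nonneg (sq_nonneg q) (sq_nonneg r)) (sub_nonneg.mpr hq)
    linarith
  rw [hdisc]
  refine ⟨⟨rfl, by positivity⟩, Real.le_half_add_sqrt_of_sq_le hk,
    Real.half_add_sqrt_le_of_le_sq (by linarith) (by linarith)⟩
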